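/- No mechanism that always outputs a stable matching can be strategy-proof for both sides simultaneously when n ≥ 3: there exists a preference profile with 3 patients and 3 doctors and an agent who can strictly benefit by misreporting. -/
import Mathlib


/-- A pair `(p, d)` blocks the matching `M` under the profile `(pr, dr)`,
where `pr p : Equiv.Perm (Fin 3)` assigns to each doctor his rank in patient
`p`'s strict preference list (lower = better), and symmetrically for `dr`. -/
def blocks (pr dr : Fin 3 → Equiv.Perm (Fin 3))
    (M : Equiv.Perm (Fin 3)) (p d : Fin 3) : Prop :=
  M p ≠ d ∧ pr p d < pr p (M p) ∧ dr d p < dr d (M.symm d)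

instance (pr dr : Fin 3 → Equiv.Perm (Fin 3)) (M : Equiv.Perm (Fin 3)) (p d : Fin 3) :
    Decidable (blocks pr dr M p d) := by unfold blocks; infer_instance

/-- The 3-cycle `0 ↦ 2, 1 ↦ 0, 2 ↦ 1`. -/
def rothCyc : Equiv.Perm (Fin 3) := Equiv.swap 1 2 * Equiv.swap 0 1

/-- Patients' true preferences in the counterexample profile. -/
def rothP : Fin 3 → Equiv.Perm (Fin 3) := ![1, Equiv.swap 0 1, 1]
/-- Doctors' true preferences in the counterexample profile. -/
def rothD : Fin 3 → Equiv.Perm (Fin 3) := ![Equiv.swap 0 1, 1, 1]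
/-- Doctor 0's misreport profile. -/
def rothD' : Fin 3 → Equiv.Perm (Fin 3) := ![rothCyc, 1, 1]
/-- Patient 1's misreport profile. -/
def rothP' : Fin 3 → Equiv.Perm (Fin 3) := ![1, rothCyc, 1]

lemma roth_L1 : ∀ M : Equiv.Perm (Fin 3), (∀ p d, ¬ blocks rothP rothD M p d) →
    M = 1 ∨ M = Equiv.swap 0 1 := by decide

lemma roth_L2 : ∀ M : Equiv.Perm (Fin 3), (∀ p d, ¬ blocks rothP rothD' M p d) →
    M = Equiv.swap 0 1 := by decide

lemma roth_L3 : ∀ M : Equiv.Perm (Fin 3), (∀ p d, ¬ blocks rothP' rothD M p d) →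
    M = 1 := by decide

/-- Roth's impossibility, 3×3 instance: no mechanism `f` that
outputs a stable matching for every profile of strict complete preferences of
3 patients and 3 doctors is strategy-proof for all agents: at some profile,
some patient or some doctor can strictly benefit by misreporting. -/
theorem no_stable_mechanism_is_strategyproof :
    ∀ f : (Fin 3 → Equiv.Perm (Fin 3)) → (Fin 3 → Equiv.Perm (Fin 3)) →
        Equiv.Perm (Fin 3),
      (∀ pr dr, ∀ p d, ¬ blocks pr dr (f pr dr) p d) →
      ∃ pr dr : Fin 3 → Equiv.Perm (Fin 3),
        (∃ (p : Fin 3) (pr' : Fin 3 → Equiv.Perm (Fin 3)),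
            (∀ q, q ≠ p → pr' q = pr q) ∧
            pr p ((f pr' dr) p) < pr p ((f pr dr) p)) ∨
        (∃ (d : Fin 3) (dr' : Fin 3 → Equiv.Perm (Fin 3)),
            (∀ e, e ≠ d → dr' e = dr e) ∧
            dr d ((f pr dr').symm d) < dr d ((f pr dr).symm d)) := by
  intro f hstable
  refine ⟨rothP, rothD, ?_⟩
  rcases roth_L1 (f rothP rothD) (hstable rothP rothD) with h | h
  · -- mechanism picks the identity matching: doctor 0 can misreport
    right
    refine ⟨0, rothD', ?_, ?_⟩
    · decide
    · rw [h, roth_L2 (f rothP rothD') (hstable rothP rothD')]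
      decide
  · -- mechanism picks swap 0 1: patient 1 can misreport
    left
    refine ⟨1, rothP', ?_, ?_⟩
    · decide
    · rw [h, roth_L3 (f rothP' rothD) (hstable rothP' rothD)]
      decide
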